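/- Let C be a nonempty weak* compact convex subset of a dual Banach space and let S, T : C → C be two commuting weak*-continuous nonexpansive maps. Then S and T have a common fixed point: there exists x ∈ C with Sx = x and Tx = x. -/

import Mathlib

/-!
Browder's resolvent method. For `t < 1` the map `y ↦ (1 - t) • x + t • S y` is a dual-norm
contraction of `C`, so it has a fixed point `J t x`. A weak* compact convex set is norm bounded
(Baire category on `C`, then convexity spreads a bound from a relatively open piece over `C`), so
`‖S (J t x) - J t x‖ = O(1 - t)` and every weak* limit of `J t x` along an ultrafilter as `t → 1`
is a fixed point of `S`. Since the dual norm is weak* lower semicontinuous, the limit map is a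
nonexpansive retraction `r` of `C` onto `Fix S`. The set `Fix S` is weak* compact and, by
commutation, `T`-invariant, but it need not be convex; replacing the convex combination by
`r ((1 - t) • x + t • T y)` runs the same argument for `T` on `Fix S`.
-/

open Filter Topology Set Bornology

theorem eventually_mem_Ico_of_le_nhdsLT {l : Filter ℝ} (hl : l ≤ 𝓝[<] 1) :
    ∀ᶠ t in l, t ∈ Ico (0 : ℝ) 1 :=
  mem_of_superset (hl (Ioo_mem_nhdsLT one_pos)) Ioo_subset_Ico_self

theorem IsCompact.eventually_forall_add_smul_sub_mem {M : Type*} [AddCommGroup M] [Module ℝ M]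
    [TopologicalSpace M] [IsTopologicalAddGroup M] [ContinuousSMul ℝ M] {K V : Set M} {u : M}
    (hK : IsCompact K) (hV : V ∈ 𝓝 u) : ∀ᶠ a in 𝓝 (0 : ℝ), ∀ x ∈ K, u + a • (x - u) ∈ V :=
  hK.eventually_forall_of_forall_eventually fun x _ =>
    (Continuous.tendsto' (by fun_prop) ((0 : ℝ), x) u (by simp)) hV

namespace WeakDual

section

variable {𝕜 E : Type*} [NontriviallyNormedField 𝕜] [NormedAddCommGroup E] [NormedSpace 𝕜 E]

theorem isClosed_setOf_norm_toStrongDual_le (c : ℝ) :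
    IsClosed {x : WeakDual 𝕜 E | ‖toStrongDual x‖ ≤ c} := by
  simpa [Metric.closedBall, dist_eq_norm] using isClosed_closedBall (0 : StrongDual 𝕜 E) c

theorem isClosed_setOf_norm_toStrongDual_sub_le (c : ℝ) :
    IsClosed {p : WeakDual 𝕜 E × WeakDual 𝕜 E | ‖toStrongDual (p.1 - p.2)‖ ≤ c} :=
  (isClosed_setOf_norm_toStrongDual_le c).preimage (continuous_fst.sub continuous_snd)

theorem isBounded_iff_forall_norm_toStrongDual_le {s : Set (WeakDual 𝕜 E)} :
    IsBounded s ↔ ∃ R, ∀ x ∈ s, ‖toStrongDual x‖ ≤ R := by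
  rw [← isBounded_toWeakDual_preimage_iff_isBounded, isBounded_iff_forall_norm_le]
  rfl

theorem tendsto_of_norm_toStrongDual_sub_le {ι : Type*} {l : Filter ι}
    {u v : ι → WeakDual 𝕜 E} {z : WeakDual 𝕜 E} {b : ι → ℝ} (hu : Tendsto u l (𝓝 z))
    (hb : Tendsto b l (𝓝 0)) (hvu : ∀ᶠ i in l, ‖toStrongDual (v i - u i)‖ ≤ b i) :
    Tendsto v l (𝓝 z) := by
  have hnorm : Tendsto (fun i => toStrongDual (v i - u i)) l (𝓝 0) := squeeze_zero_norm' hvu hb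
  have hweak := (NormedSpace.Dual.toWeakDual_continuous.tendsto 0).comp hnorm
  simpa using hu.add hweak

theorem exists_fixedPt_of_contraction [CompleteSpace 𝕜] {F : Set (WeakDual 𝕜 E)}
    (hF : IsClosed F) (hne : F.Nonempty) {g : WeakDual 𝕜 E → WeakDual 𝕜 E} (hg : MapsTo g F F)
    {K : NNReal} (hK : K < 1)
    (hgK : ∀ a ∈ F, ∀ b ∈ F, ‖toStrongDual (g a - g b)‖ ≤ K * ‖toStrongDual (a - b)‖) :
    ∃ y ∈ F, g y = y := by
  -- Banach's theorem in the norm-complete `StrongDual`, where `F` is still closed.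
  set s : Set (StrongDual 𝕜 E) := StrongDual.toWeakDual ⁻¹' F
  set f : StrongDual 𝕜 E → StrongDual 𝕜 E := fun y => toStrongDual (g (StrongDual.toWeakDual y))
  have hs : IsComplete s := (hF.preimage NormedSpace.Dual.toWeakDual_continuous).isComplete
  have hf : MapsTo f s s := fun _ hy => hg hy
  have hfK : ContractingWith K (hf.restrict f s s) := by
    refine ⟨hK, LipschitzWith.of_dist_le_mul fun a b => ?_⟩
    rw [Subtype.dist_eq, Subtype.dist_eq, dist_eq_norm, dist_eq_norm]
    exact hgK _ a.2 _ b.2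
  obtain ⟨x, hx⟩ := hne
  obtain ⟨y, hy, hfy, -⟩ := hfK.exists_fixedPoint' hs hf (x := toStrongDual x) (by simpa [s])
    (edist_ne_top _ _)
  exact ⟨StrongDual.toWeakDual y, hy, by simpa [f] using congrArg StrongDual.toWeakDual hfy⟩

end

variable {E : Type*} [NormedAddCommGroup E] [NormedSpace ℝ E]

theorem isBounded_of_isCompact_of_convex {C : Set (WeakDual ℝ E)} (hcomp : IsCompact C)
    (hconv : Convex ℝ C) : IsBounded C := by
  rcases C.eq_empty_or_nonempty with rfl | hne
  · exact isBounded_empty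
  have : CompactSpace C := isCompact_iff_compactSpace.mp hcomp
  have : Nonempty C := hne.to_subtype
  obtain ⟨n, ⟨u, huC⟩, hu⟩ := nonempty_interior_of_iUnion_of_closed
    (f := fun n : ℕ => {k : C | ‖toStrongDual (k : WeakDual ℝ E)‖ ≤ n})
    (fun n => (isClosed_setOf_norm_toStrongDual_le _).preimage continuous_subtype_val)
    (iUnion_eq_univ_iff.2 fun k => exists_nat_ge ‖toStrongDual (k : WeakDual ℝ E)‖)
  obtain ⟨V, hV, hVn⟩ := (mem_nhds_subtype C _ _).1 (mem_interior_iff_mem_nhds.1 hu)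
  obtain ⟨a, haV, ha⟩ := (((hcomp.eventually_forall_add_smul_sub_mem hV).filter_mono
    nhdsWithin_le_nhds).and (Ioo_mem_nhdsGT one_pos)).exists
  refine (isBounded_closedBall (toStrongDual u) ((n + ‖toStrongDual u‖) / a)).subset
    fun x hx => ?_
  have hxa : u + a • (x - u) ∈ C := hconv.add_smul_sub_mem huC hx ⟨ha.1.le, ha.2.le⟩
  have hxn : ‖toStrongDual (u + a • (x - u))‖ ≤ n := hVn (a := ⟨_, hxa⟩) (haV x hx)
  rw [mem_preimage, Metric.mem_closedBall, dist_eq_norm, le_div_iff₀ ha.1, ← map_sub]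
  calc ‖toStrongDual (x - u)‖ * a = ‖toStrongDual (u + a • (x - u)) - toStrongDual u‖ := by
        rw [map_add, add_sub_cancel_left, map_smul, norm_smul, Real.norm_of_nonneg ha.1.le,
          mul_comm]
    _ ≤ n + ‖toStrongDual u‖ := (norm_sub_le _ _).trans (by gcongr)

def NonexpansiveOn (f : WeakDual ℝ E → WeakDual ℝ E) (s : Set (WeakDual ℝ E)) : Prop :=
  ∀ x ∈ s, ∀ y ∈ s, ‖toStrongDual (f x - f y)‖ ≤ ‖toStrongDual (x - y)‖

structure IsNonexpansiveRetraction (ρ : WeakDual ℝ E → WeakDual ℝ E) (C F : Set (WeakDual ℝ E)) :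
    Prop where
  subset : F ⊆ C
  mapsTo : MapsTo ρ C F
  nonexpansiveOn : NonexpansiveOn ρ C
  apply_eq : ∀ x ∈ F, ρ x = x

theorem isNonexpansiveRetraction_id (C : Set (WeakDual ℝ E)) : IsNonexpansiveRetraction id C C :=
  ⟨subset_rfl, mapsTo_id C, fun _ _ _ _ => le_rfl, fun _ _ => rfl⟩

namespace IsNonexpansiveRetraction

variable {ρ T : WeakDual ℝ E → WeakDual ℝ E} {C F : Set (WeakDual ℝ E)} {t : ℝ}

theorem one_sub_smul_add_smul_mem (hρ : IsNonexpansiveRetraction ρ C F) (hconv : Convex ℝ C)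
    (hT : MapsTo T F F) (ht : t ∈ Ico (0 : ℝ) 1) {x y : WeakDual ℝ E} (hx : x ∈ C) (hy : y ∈ F) :
    (1 - t) • x + t • T y ∈ C :=
  hconv hx (hρ.subset (hT hy)) (sub_nonneg.2 ht.2.le) ht.1 (sub_add_cancel 1 t)

/-- The resolvent of `T` relative to `ρ`: a fixed point of `y ↦ ρ ((1 - t) • x + t • T y)`. -/
theorem exists_resolvent (hρ : IsNonexpansiveRetraction ρ C F) (hconv : Convex ℝ C)
    (hT : MapsTo T F F) (hTne : NonexpansiveOn T F) (hF : IsClosed F) (ht : t ∈ Ico (0 : ℝ) 1)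
    {x : WeakDual ℝ E} (hx : x ∈ C) : ∃ y ∈ F, ρ ((1 - t) • x + t • T y) = y := by
  have hmem := fun {y} (hy : y ∈ F) => hρ.one_sub_smul_add_smul_mem hconv hT ht hx hy
  refine exists_fixedPt_of_contraction hF ⟨ρ x, hρ.mapsTo hx⟩
    (fun y hy => hρ.mapsTo (hmem hy)) (K := ⟨t, ht.1⟩) ht.2 fun a ha b hb => ?_
  calc ‖toStrongDual (ρ ((1 - t) • x + t • T a) - ρ ((1 - t) • x + t • T b))‖
      ≤ ‖toStrongDual ((1 - t) • x + t • T a - ((1 - t) • x + t • T b))‖ :=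
        hρ.nonexpansiveOn _ (hmem ha) _ (hmem hb)
    _ = t * ‖toStrongDual (T a - T b)‖ := by
        rw [show (1 - t) • x + t • T a - ((1 - t) • x + t • T b) = t • (T a - T b) by module,
          map_smul, norm_smul, Real.norm_of_nonneg ht.1]
    _ ≤ t * ‖toStrongDual (a - b)‖ := mul_le_mul_of_nonneg_left (hTne a ha b hb) ht.1

theorem norm_sub_le_of_resolvent (hρ : IsNonexpansiveRetraction ρ C F) (hconv : Convex ℝ C)
    (hT : MapsTo T F F) (hTne : NonexpansiveOn T F) (ht : t ∈ Ico (0 : ℝ) 1)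
    {x x' y y' : WeakDual ℝ E} (hx : x ∈ C) (hx' : x' ∈ C) (hy : y ∈ F) (hy' : y' ∈ F)
    (hxy : ρ ((1 - t) • x + t • T y) = y) (hxy' : ρ ((1 - t) • x' + t • T y') = y') :
    ‖toStrongDual (y - y')‖ ≤ ‖toStrongDual (x - x')‖ := by
  have hbound : ‖toStrongDual (y - y')‖
      ≤ (1 - t) * ‖toStrongDual (x - x')‖ + t * ‖toStrongDual (y - y')‖ :=
    calc ‖toStrongDual (y - y')‖
        = ‖toStrongDual (ρ ((1 - t) • x + t • T y) - ρ ((1 - t) • x' + t • T y'))‖ := by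
          rw [hxy, hxy']
      _ ≤ ‖toStrongDual ((1 - t) • x + t • T y - ((1 - t) • x' + t • T y'))‖ :=
          hρ.nonexpansiveOn _ (hρ.one_sub_smul_add_smul_mem hconv hT ht hx hy) _
            (hρ.one_sub_smul_add_smul_mem hconv hT ht hx' hy')
      _ = ‖(1 - t) • toStrongDual (x - x') + t • toStrongDual (T y - T y')‖ := by
          rw [← map_smul, ← map_smul, ← map_add]
          congr 2
          module
      _ ≤ (1 - t) * ‖toStrongDual (x - x')‖ + t * ‖toStrongDual (T y - T y')‖ := by
          refine (norm_add_le _ _).trans_eq ?_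
          rw [norm_smul, norm_smul, Real.norm_of_nonneg (sub_nonneg.2 ht.2.le),
            Real.norm_of_nonneg ht.1]
      _ ≤ (1 - t) * ‖toStrongDual (x - x')‖ + t * ‖toStrongDual (y - y')‖ := by
          gcongr
          · exact ht.1
          · exact hTne y hy y' hy'
  exact le_of_mul_le_mul_left (by linarith) (sub_pos.2 ht.2)

theorem norm_apply_sub_le_of_resolvent (hρ : IsNonexpansiveRetraction ρ C F)
    (hconv : Convex ℝ C) (hT : MapsTo T F F) (ht : t ∈ Ico (0 : ℝ) 1) {x y : WeakDual ℝ E}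
    (hx : x ∈ C) (hy : y ∈ F) (hxy : ρ ((1 - t) • x + t • T y) = y) :
    ‖toStrongDual (T y - y)‖ ≤ (1 - t) * ‖toStrongDual (T y - x)‖ :=
  calc ‖toStrongDual (T y - y)‖ = ‖toStrongDual (ρ (T y) - ρ ((1 - t) • x + t • T y))‖ := by
        rw [hρ.apply_eq _ (hT hy), hxy]
    _ ≤ ‖toStrongDual (T y - ((1 - t) • x + t • T y))‖ :=
        hρ.nonexpansiveOn _ (hρ.subset (hT hy)) _
          (hρ.one_sub_smul_add_smul_mem hconv hT ht hx hy)
    _ = (1 - t) * ‖toStrongDual (T y - x)‖ := by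
        rw [show T y - ((1 - t) • x + t • T y) = (1 - t) • (T y - x) by module, map_smul,
          norm_smul, Real.norm_of_nonneg (sub_nonneg.2 ht.2.le)]

theorem resolvent_eq_of_apply_eq (hρ : IsNonexpansiveRetraction ρ C F) (hconv : Convex ℝ C)
    (hT : MapsTo T F F) (hTne : NonexpansiveOn T F) (ht : t ∈ Ico (0 : ℝ) 1)
    {x y : WeakDual ℝ E} (hx : x ∈ F) (hTx : T x = x) (hy : y ∈ F)
    (hxy : ρ ((1 - t) • x + t • T y) = y) : y = x := by
  have hxx : ρ ((1 - t) • x + t • T x) = x := by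
    rw [hTx, ← add_smul, sub_add_cancel, one_smul, hρ.apply_eq x hx]
  have h := hρ.norm_sub_le_of_resolvent hconv hT hTne ht (hρ.subset hx) (hρ.subset hx) hy hx
    hxy hxx
  rw [sub_self, map_zero, norm_zero, norm_le_zero_iff, map_eq_zero_iff _ toStrongDual.injective,
    sub_eq_zero] at h
  exact h

theorem exists_tendsto_resolvent_fixedPt (hρ : IsNonexpansiveRetraction ρ C F)
    (hconv : Convex ℝ C) (hCb : IsBounded C) (hT : MapsTo T F F) (hTc : ContinuousOn T F)
    (hF : IsCompact F) {U : Ultrafilter ℝ} (hU : ↑U ≤ 𝓝[<] (1 : ℝ)) {x : WeakDual ℝ E}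
    (hx : x ∈ C) {y : ℝ → WeakDual ℝ E} (hyF : ∀ t ∈ Ico (0 : ℝ) 1, y t ∈ F)
    (hy : ∀ t ∈ Ico (0 : ℝ) 1, ρ ((1 - t) • x + t • T (y t)) = y t) :
    ∃ z ∈ F, Tendsto y U (𝓝 z) ∧ T z = z := by
  have hIco := eventually_mem_Ico_of_le_nhdsLT hU
  obtain ⟨z, hzF, hyz⟩ := hF.ultrafilter_le_nhds' (U.map y) (hIco.mono hyF)
  obtain ⟨R, hR⟩ := isBounded_iff_forall_norm_toStrongDual_le.1 hCb
  have hTyz : Tendsto (T ∘ y) U (𝓝 (T z)) :=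
    (hTc z hzF).tendsto.comp (tendsto_nhdsWithin_iff.2 ⟨hyz, hIco.mono hyF⟩)
  have hdisp : Tendsto (fun t : ℝ => (1 - t) * (2 * R)) U (𝓝 0) :=
    ((Continuous.tendsto' (by fun_prop) 1 0 (by simp)).mono_left nhdsWithin_le_nhds).mono_left hU
  have hTyz' : Tendsto (T ∘ y) U (𝓝 z) := by
    refine tendsto_of_norm_toStrongDual_sub_le hyz hdisp (hIco.mono fun t ht => ?_)
    have hTy : ‖toStrongDual (T (y t) - x)‖ ≤ 2 * R := by
      rw [map_sub, two_mul]
      exact (norm_sub_le _ _).trans (add_le_add (hR _ (hρ.subset (hT (hyF t ht)))) (hR x hx))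
    exact (hρ.norm_apply_sub_le_of_resolvent hconv hT ht hx (hyF t ht) (hy t ht)).trans
      (mul_le_mul_of_nonneg_left hTy (sub_nonneg.2 ht.2.le))
  exact ⟨z, hzF, hyz, tendsto_nhds_unique hTyz hTyz'⟩

end IsNonexpansiveRetraction

theorem exists_isNonexpansiveRetraction_fixedPoints {C : Set (WeakDual ℝ E)}
    (hcomp : IsCompact C) (hconv : Convex ℝ C) {S : WeakDual ℝ E → WeakDual ℝ E} (hS : MapsTo S C C)
    (hSc : ContinuousOn S C) (hSne : NonexpansiveOn S C) :
    ∃ r, IsNonexpansiveRetraction r C {x ∈ C | S x = x} := by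
  let U := Ultrafilter.of (𝓝[<] (1 : ℝ))
  have hU : ↑U ≤ 𝓝[<] (1 : ℝ) := Ultrafilter.of_le _
  have hid := isNonexpansiveRetraction_id C
  choose! J hJC hJ using fun t (ht : t ∈ Ico (0 : ℝ) 1) x (hx : x ∈ C) =>
    hid.exists_resolvent hconv hS hSne hcomp.isClosed ht hx
  choose! r hrC hr hSr using fun x (hx : x ∈ C) =>
    hid.exists_tendsto_resolvent_fixedPt hconv (isBounded_of_isCompact_of_convex hcomp hconv) hS
      hSc hcomp hU hx (y := (J · x)) (fun t ht => hJC t ht x hx) (fun t ht => hJ t ht x hx)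
  have hIco := eventually_mem_Ico_of_le_nhdsLT hU
  refine ⟨r, fun x hx => hx.1, fun x hx => ⟨hrC x hx, hSr x hx⟩, fun x hx x' hx' => ?_,
    fun x hx => ?_⟩
  · have hJJ : ∀ᶠ t in (U : Filter ℝ), (J t x, J t x') ∈
        {p : WeakDual ℝ E × WeakDual ℝ E |
          ‖toStrongDual (p.1 - p.2)‖ ≤ ‖toStrongDual (x - x')‖} :=
      hIco.mono fun t ht => hid.norm_sub_le_of_resolvent hconv hS hSne ht hx hx' (hJC t ht x hx)
        (hJC t ht x' hx') (hJ t ht x hx) (hJ t ht x' hx')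
    have hmem := (isClosed_setOf_norm_toStrongDual_sub_le _).mem_of_tendsto
      ((hr x hx).prodMk_nhds (hr x' hx')) hJJ
    exact hmem
  · refine tendsto_nhds_unique (hr x hx.1) (tendsto_const_nhds.congr' (hIco.mono fun t ht => ?_))
    exact (hid.resolvent_eq_of_apply_eq hconv hS hSne ht hx.1 hx.2 (hJC t ht x hx.1)
      (hJ t ht x hx.1)).symm

end WeakDual

/-- Two commuting weak*-continuous nonexpansive self-maps of a
nonempty weak* compact convex set `C` have a common fixed point. -/
theorem stmt17 {E : Type*} [NormedAddCommGroup E] [NormedSpace ℝ E]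
    (C : Set (WeakDual ℝ E)) (hne : C.Nonempty) (hcomp : IsCompact C) (hconv : Convex ℝ C)
    (S T : WeakDual ℝ E → WeakDual ℝ E)
    (hSmaps : Set.MapsTo S C C) (hTmaps : Set.MapsTo T C C)
    (hSc : ContinuousOn S C) (hTc : ContinuousOn T C)
    (hSne : ∀ y ∈ C, ∀ z ∈ C,
      ‖WeakDual.toStrongDual (S y - S z)‖ ≤ ‖WeakDual.toStrongDual (y - z)‖)
    (hTne : ∀ y ∈ C, ∀ z ∈ C,
      ‖WeakDual.toStrongDual (T y - T z)‖ ≤ ‖WeakDual.toStrongDual (y - z)‖)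
    (hcomm : ∀ x ∈ C, S (T x) = T (S x)) :
    ∃ x ∈ C, S x = x ∧ T x = x := by
  obtain ⟨r, hr⟩ :=
    WeakDual.exists_isNonexpansiveRetraction_fixedPoints hcomp hconv hSmaps hSc hSne
  set F := {x ∈ C | S x = x}
  have hF : IsCompact F :=
    hcomp.of_isClosed_subset (hcomp.isClosed.isClosed_eq hSc continuousOn_id) (sep_subset _ _)
  have hTF : MapsTo T F F := fun x hx => ⟨hTmaps hx.1, by rw [hcomm x hx.1, hx.2]⟩
  obtain ⟨x₀, hx₀⟩ := hne
  choose! y hyF hy using fun t (ht : t ∈ Ico (0 : ℝ) 1) =>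
    hr.exists_resolvent hconv hTF (fun a ha b hb => hTne a ha.1 b hb.1) hF.isClosed ht hx₀
  obtain ⟨z, hzF, -, hTz⟩ := hr.exists_tendsto_resolvent_fixedPt hconv
    (WeakDual.isBounded_of_isCompact_of_convex hcomp hconv) hTF (hTc.mono (sep_subset _ _)) hF
    (Ultrafilter.of_le (𝓝[<] (1 : ℝ))) hx₀ hyF hy
  exact ⟨z, hzF.1, hzF.2, hTz⟩
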